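/- arXiv:1806.02255 — 2 statements merged into one kernel-verified Lean document; each statement's English description precedes it below -/
import Mathlib

section
/- In the setting of the previous proposition, suppose additionally that each agent's feasible set is defined by a shared constraint: K_i(x_{-i}) = {x_i ∈ ℝ^{n_i} : (x_i, x_{-i}) ∈ X} for i = 1,…,N+1, where X ⊆ ℝ^n is a closed convex set. If x* solves VI(X, F), with F(x) = (∇_{x_1} f_1(x), …, ∇_{x_N} f_N(x), G(x)), then x* solves QVI(K, F) where K(x) = ∏_{i=1}^{N+1} K_i(x_{-i}); consequently, under the convexity and differentiability assumptions on the f_i and continuity of G, x* solves the MOPEC. -/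
/-!
Testing the variational inequality VI(X, F) against points that differ from `x*` in a single
block `j` kills every summand but the `j`-th, and the shared constraint says these are exactly the
points of `K_j(x*_{-j})`. So each block satisfies its own variational inequality; summing gives
the QVI, the last block is the VI of the MOPEC, and for an agent `i` the inequality
`⟪∇_{x_i} f_i(x*), x_i - x*_i⟫ ≥ 0` makes `x*_i` a minimiser by the first-order characterisation
of convex differentiable functions.
-/

open RealInnerProductSpace

section FirstOrder

variable {E : Type*} [NormedAddCommGroup E]

theorem ConvexOn.add_fderiv_sub_le [NormedSpace ℝ E] {g : E → ℝ} {g' : E →L[ℝ] ℝ} {x : E}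
    (hconv : ConvexOn ℝ Set.univ g) (hg : HasFDerivAt g g' x) (y : E) :
    g x + g' (y - x) ≤ g y := by
  set φ : ℝ → ℝ := g ∘ AffineMap.lineMap x y
  have hφconv : ConvexOn ℝ Set.univ φ := hconv.comp_affineMap (AffineMap.lineMap x y)
  have hline : HasDerivAt (AffineMap.lineMap x y : ℝ → E) (y - x) 0 :=
    AffineMap.hasDerivAt_lineMap
  have hφ : HasDerivAt φ (g' (y - x)) 0 := by
    simpa using hg.comp_hasDerivAt_of_eq 0 hline (by simp)
  have hslope := hφconv.le_slope_of_hasDerivAt (Set.mem_univ 0) (Set.mem_univ 1) one_pos hφ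
  simp only [slope_def_field, φ, Function.comp_apply, AffineMap.lineMap_apply_zero,
    AffineMap.lineMap_apply_one, sub_zero, div_one] at hslope
  linarith

theorem ConvexOn.le_of_inner_gradient_nonneg [InnerProductSpace ℝ E] [CompleteSpace E]
    {g : E → ℝ} {g' x y : E} (hconv : ConvexOn ℝ Set.univ g) (hg : HasGradientAt g g' x)
    (hy : 0 ≤ ⟪g', y - x⟫) : g x ≤ g y := by
  have := hconv.add_fderiv_sub_le hg.hasFDerivAt y
  rw [InnerProductSpace.toDual_apply_apply] at this
  linarith

end FirstOrder

section BlockVariationalInequality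

variable {ι : Type*} [Fintype ι] [DecidableEq ι] {E : ι → Type*}
  [∀ j, NormedAddCommGroup (E j)] [∀ j, InnerProductSpace ℝ (E j)]

theorem sum_inner_update_sub (F x : (j : ι) → E j) (i : ι) (v : E i) :
    ∑ j, ⟪F j, Function.update x i v j - x j⟫ = ⟪F i, v - x i⟫ := by
  rw [Finset.sum_eq_single_of_mem i (Finset.mem_univ i)]
  · rw [Function.update_self]
  · intro j _ hji
    rw [Function.update_of_ne hji, sub_self, inner_zero_right]

theorem inner_nonneg_of_update_mem {S : Set ((j : ι) → E j)} {F x : (j : ι) → E j}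
    (hVI : ∀ y ∈ S, 0 ≤ ∑ j, ⟪F j, y j - x j⟫) {i : ι} {v : E i}
    (hv : Function.update x i v ∈ S) : 0 ≤ ⟪F i, v - x i⟫ :=
  sum_inner_update_sub F x i v ▸ hVI _ hv

end BlockVariationalInequality

theorem stmt_2_general {N : ℕ} {n : Fin (N + 1) → ℕ}
    (f : Fin N → ((j : Fin (N + 1)) → EuclideanSpace ℝ (Fin (n j))) → ℝ)
    (G : ((j : Fin (N + 1)) → EuclideanSpace ℝ (Fin (n j))) →
      EuclideanSpace ℝ (Fin (n (Fin.last N))))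
    (X : Set ((j : Fin (N + 1)) → EuclideanSpace ℝ (Fin (n j))))
    (hf : ∀ i, ContDiff ℝ 1 (f i))
    (hfconv : ∀ i x, ConvexOn ℝ Set.univ
      (fun xi => f i (Function.update x i.castSucc xi)))
    (K : (i : Fin (N + 1)) → ((j : Fin (N + 1)) → EuclideanSpace ℝ (Fin (n j))) →
      Set (EuclideanSpace ℝ (Fin (n i))))
    (hK : ∀ i x, K i x = {xi | Function.update x i xi ∈ X})
    (xs : (j : Fin (N + 1)) → EuclideanSpace ℝ (Fin (n j)))
    -- xs solves VI(X, F)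
    (hxsX : xs ∈ X)
    (hVI : ∀ x ∈ X,
      0 ≤ ∑ j, ⟪(Fin.lastCases (motive := fun j => EuclideanSpace ℝ (Fin (n j)))
          (G xs)
          (fun i => gradient (fun xi => f i (Function.update xs i.castSucc xi))
            (xs i.castSucc)) j), x j - xs j⟫) :
    -- xs solves QVI(K, F)
    (((∀ j, xs j ∈ K j xs) ∧
      ∀ x : (j : Fin (N + 1)) → EuclideanSpace ℝ (Fin (n j)),
        (∀ j, x j ∈ K j xs) →
        0 ≤ ∑ j, ⟪(Fin.lastCases (motive := fun j => EuclideanSpace ℝ (Fin (n j)))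
            (G xs)
            (fun i => gradient (fun xi => f i (Function.update xs i.castSucc xi))
              (xs i.castSucc)) j), x j - xs j⟫))
    ∧
    -- xs solves the MOPEC
    ((∀ i : Fin N, xs i.castSucc ∈ K i.castSucc xs ∧
        ∀ xi ∈ K i.castSucc xs, f i xs ≤ f i (Function.update xs i.castSucc xi)) ∧
      (xs (Fin.last N) ∈ K (Fin.last N) xs ∧
        ∀ z ∈ K (Fin.last N) xs, 0 ≤ ⟪G xs, z - xs (Fin.last N)⟫)) := by
  have hmem : ∀ j, xs j ∈ K j xs := fun j => by simpa [hK] using hxsX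
  have hblock : ∀ j, ∀ v ∈ K j xs, 0 ≤ ⟪_, v - xs j⟫ := fun j v hv =>
    inner_nonneg_of_update_mem hVI (by rwa [hK] at hv)
  refine ⟨⟨hmem, fun x hx => Finset.sum_nonneg fun j _ => hblock j _ (hx j)⟩,
    fun i => ⟨hmem _, fun xi hxi => ?_⟩, hmem _, fun z hz => by simpa using hblock _ z hz⟩
  have hdiff : DifferentiableAt ℝ (fun xi => f i (Function.update xs i.castSucc xi))
      (xs i.castSucc) :=
    ((hf i).differentiable one_ne_zero).differentiableAt.comp _
      (hasFDerivAt_update xs _).differentiableAt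
  have hgrad := hblock i.castSucc xi hxi
  rw [Fin.lastCases_castSucc] at hgrad
  simpa using (hfconv i xs).le_of_inner_gradient_nonneg hdiff.hasGradientAt hgrad

/-- Proposition 2: with a shared constraint Kᵢ(x₋ᵢ) = {xᵢ : (xᵢ, x₋ᵢ) ∈ X} for a
closed convex set X, any solution of VI(X, F) solves QVI(K, F) and hence the MOPEC. -/
theorem stmt_2 {N : ℕ} {n : Fin (N + 1) → ℕ}
    (f : Fin N → ((j : Fin (N + 1)) → EuclideanSpace ℝ (Fin (n j))) → ℝ)
    (G : ((j : Fin (N + 1)) → EuclideanSpace ℝ (Fin (n j))) →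
      EuclideanSpace ℝ (Fin (n (Fin.last N))))
    (X : Set ((j : Fin (N + 1)) → EuclideanSpace ℝ (Fin (n j))))
    (hXclosed : IsClosed X) (hXconv : Convex ℝ X)
    (hf : ∀ i, ContDiff ℝ 1 (f i))
    (hfconv : ∀ i x, ConvexOn ℝ Set.univ
      (fun xi => f i (Function.update x i.castSucc xi)))
    (hG : Continuous G)
    (K : (i : Fin (N + 1)) → ((j : Fin (N + 1)) → EuclideanSpace ℝ (Fin (n j))) →
      Set (EuclideanSpace ℝ (Fin (n i))))
    (hK : ∀ i x, K i x = {xi | Function.update x i xi ∈ X})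
    (xs : (j : Fin (N + 1)) → EuclideanSpace ℝ (Fin (n j)))
    -- xs solves VI(X, F)
    (hxsX : xs ∈ X)
    (hVI : ∀ x ∈ X,
      0 ≤ ∑ j, ⟪(Fin.lastCases (motive := fun j => EuclideanSpace ℝ (Fin (n j)))
          (G xs)
          (fun i => gradient (fun xi => f i (Function.update xs i.castSucc xi))
            (xs i.castSucc)) j), x j - xs j⟫) :
    -- xs solves QVI(K, F)
    (((∀ j, xs j ∈ K j xs) ∧
      ∀ x : (j : Fin (N + 1)) → EuclideanSpace ℝ (Fin (n j)),
        (∀ j, x j ∈ K j xs) →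
        0 ≤ ∑ j, ⟪(Fin.lastCases (motive := fun j => EuclideanSpace ℝ (Fin (n j)))
            (G xs)
            (fun i => gradient (fun xi => f i (Function.update xs i.castSucc xi))
              (xs i.castSucc)) j), x j - xs j⟫))
    ∧
    -- xs solves the MOPEC
    ((∀ i : Fin N, xs i.castSucc ∈ K i.castSucc xs ∧
        ∀ xi ∈ K i.castSucc xs, f i xs ≤ f i (Function.update xs i.castSucc xi)) ∧
      (xs (Fin.last N) ∈ K (Fin.last N) xs ∧
        ∀ z ∈ K (Fin.last N) xs, 0 ≤ ⟪G xs, z - xs (Fin.last N)⟫)) :=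
  stmt_2_general f G X hf hfconv K hK xs hxsX hVI
end

section
/- Consider N optimization agents and one equilibrium agent, with agent i controlling x_i ∈ ℝ^{n_i}, and suppose K_i(x_{-i}) = {x_i ∈ [l_i, u_i] : h_i(x_i, x_{-i}) = 0, g_i(x_i, x_{-i}) ≤ 0} where h_i : ℝ^n → ℝ^{v_i} is affine, g_i : ℝ^n → ℝ^{m_i} is continuously differentiable with each component convex as a function of x_i, l_i ≤ u_i with entries of l_i in ℝ∪{−∞} and of u_i in ℝ∪{+∞}, each f_i : ℝ^n → ℝ (i = 1,…,N) is continuously differentiable with f_i(·, x_{-i}) convex, and G : ℝ^n → ℝ^{n_{N+1}} is continuous. Suppose (x*, λ*, μ*) satisfies the complementarity system: for i = 1,…,N, componentwise box complementarity l_i ≤ x_i* ≤ u_i ⊥ ∇_{x_i} f_i(x*) − ∇_{x_i} h_i(x*) λ_i* − ∇_{x_i} g_i(x*) μ_i*; for i = N+1 the same condition with G(x*) in place of the objective gradient; h_i(x*) = 0 for all i with λ_i* free; and for all i, g_i(x*) ≤ 0, μ_i* ≤ 0, with componentwise complementarity μ*_{i,j} g_{i,j}(x*) = 0. Then x* solves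 the MOPEC. (This is the 'if' direction of Proposition 3; it holds without any constraint qualification.) -/
open RealInnerProductSpace

/-!
A solution of the complementarity system satisfies, for every agent `i` and every `z ∈ Kᵢ(x*₋ᵢ)`,
`⟪Vᵢ, z - xᵢ*⟫ ≥ 0`, where `Vᵢ` is the objective gradient (or `G(x*)` for the equilibrium agent):
the box complementarity makes the Lagrangian gradient pair nonnegatively with `z - xᵢ*`, the
affine equality constraints contribute `hᵢ(z) - hᵢ(x*) = 0`, and by convexity together with
`μ ≤ 0` and complementary slackness each inequality term contributes at least `μ gᵢ(z) ≥ 0`.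
For an optimization agent, convexity of `fᵢ(·, x*₋ᵢ)` turns this variational inequality into
minimality. No constraint qualification is needed since the multipliers are given.
-/

open InnerProductSpace

section Gradient

variable {E : Type*} [NormedAddCommGroup E] [InnerProductSpace ℝ E]

theorem ConvexOn.inner_gradient_sub_le [CompleteSpace E] {φ : E → ℝ}
    (hφ : ConvexOn ℝ Set.univ φ) {x : E} (hd : DifferentiableAt ℝ φ x) (y : E) :
    ⟪gradient φ x, y - x⟫ ≤ φ y - φ x := by
  have hline : HasDerivAt (fun t : ℝ => φ (AffineMap.lineMap x y t))
      (toDual ℝ E (gradient φ x) (y - x)) 0 := by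
    have hφ' : HasFDerivAt φ (toDual ℝ E (gradient φ x)) (AffineMap.lineMap x y (0 : ℝ)) := by
      simpa using hd.hasGradientAt.hasFDerivAt
    exact hφ'.comp_hasDerivAt 0 (AffineMap.hasDerivAt_lineMap (a := x) (b := y))
  have hslope := (hφ.comp_affineMap (AffineMap.lineMap x y)).le_slope_of_hasDerivAt
    (Set.mem_univ 0) (Set.mem_univ 1) one_pos hline
  simpa [toDual_apply_apply, slope_def_field] using hslope

theorem inner_gradient_sub_eq_of_eq_add_const [FiniteDimensional ℝ E] {F : E → ℝ}
    {ψ : E →ₗ[ℝ] ℝ} {c : ℝ} (hF : ∀ y, F y = ψ y + c) (x y : E) :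
    ⟪gradient F x, y - x⟫ = F y - F x := by
  obtain rfl : F = fun y => ψ.toContinuousLinearMap y + c := funext hF
  rw [(ψ.toContinuousLinearMap.hasFDerivAt.add_const c).hasGradientAt.gradient,
    toDual_symm_apply]
  simp

end Gradient

section Box

variable {ι : Type*} [Fintype ι]

/-- Componentwise `l ≤ x ≤ u ⊥ w`; the bounds are extended reals so that they may be `±∞`. -/
def BoxComplementary (l u : ι → EReal) (x w : EuclideanSpace ℝ ι) : Prop :=
  ∀ k, ((x k : EReal) = l k ∧ 0 ≤ w k) ∨ w k = 0 ∨ ((x k : EReal) = u k ∧ w k ≤ 0)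

theorem BoxComplementary.inner_sub_nonneg {l u : ι → EReal} {x w z : EuclideanSpace ℝ ι}
    (hxw : BoxComplementary l u x w) (hz : ∀ k, l k ≤ (z k : EReal) ∧ (z k : EReal) ≤ u k) :
    0 ≤ ⟪w, z - x⟫ := by
  rw [PiLp.inner_apply]
  refine Finset.sum_nonneg fun k _ => ?_
  rw [real_inner_eq_re_inner, RCLike.inner_apply, PiLp.sub_apply]
  rcases hxw k with ⟨hl, hw⟩ | hw | ⟨hu, hw⟩
  · have : x k ≤ z k := EReal.coe_le_coe_iff.mp (hl ▸ (hz k).1)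
    simp only [RCLike.re_to_real, conj_trivial]
    nlinarith
  · simp [hw]
  · have : z k ≤ x k := EReal.coe_le_coe_iff.mp (hu ▸ (hz k).2)
    simp only [RCLike.re_to_real, conj_trivial]
    nlinarith

end Box

section Update

variable {ι : Type*} [DecidableEq ι] {E : ι → Type*} [∀ j, AddCommGroup (E j)]
  [∀ j, Module ℝ (E j)]

theorem exists_update_eq_add_const {F : (∀ j, E j) → ℝ} {φ : (∀ j, E j) →ₗ[ℝ] ℝ} {c : ℝ}
    (hF : ∀ y, F y = φ y + c) (x : ∀ j, E j) (i : ι) :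
    ∃ (ψ : E i →ₗ[ℝ] ℝ) (c' : ℝ), ∀ z, F (Function.update x i z) = ψ z + c' := by
  refine ⟨φ.comp (LinearMap.single ℝ E i), φ (Function.update x i 0) + c, fun z => ?_⟩
  have hsplit : Function.update x i z = Pi.single i z + Function.update x i 0 := by
    ext j
    rcases eq_or_ne j i with rfl | hj <;> simp [*]
  rw [hF, hsplit, map_add]
  simp only [LinearMap.comp_apply, LinearMap.coe_single]
  ring

end Update

theorem inner_sub_nonneg_of_lagrangian {E α β : Type*} [NormedAddCommGroup E]
    [InnerProductSpace ℝ E] [FiniteDimensional ℝ E] [Fintype α] [Fintype β]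
    {V x z : E} {H : α → E → ℝ} {C : β → E → ℝ} {lam : α → ℝ} {mu : β → ℝ}
    (hH : ∀ a, ∃ (ψ : E →ₗ[ℝ] ℝ) (c : ℝ), ∀ y, H a y = ψ y + c)
    (hC : ∀ b, ConvexOn ℝ Set.univ (C b)) (hCd : ∀ b, DifferentiableAt ℝ (C b) x)
    (hL : 0 ≤ ⟪V - ∑ a, lam a • gradient (H a) x - ∑ b, mu b • gradient (C b) x, z - x⟫)
    (hHx : ∀ a, H a x = 0) (hHz : ∀ a, H a z = 0) (hCz : ∀ b, C b z ≤ 0)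
    (hmu : ∀ b, mu b ≤ 0) (hslack : ∀ b, mu b * C b x = 0) :
    0 ≤ ⟪V, z - x⟫ := by
  have hHterm : ∀ a, ⟪gradient (H a) x, z - x⟫ = 0 := fun a => by
    obtain ⟨ψ, c, hψ⟩ := hH a
    rw [inner_gradient_sub_eq_of_eq_add_const hψ, hHz, hHx, sub_zero]
  have hCterm : ∀ b, 0 ≤ mu b * ⟪gradient (C b) x, z - x⟫ := fun b => by
    nlinarith [(hC b).inner_gradient_sub_le (hCd b) z, hmu b, hslack b, hCz b]
  have hsplit : ⟪V, z - x⟫ =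
      ⟪V - ∑ a, lam a • gradient (H a) x - ∑ b, mu b • gradient (C b) x, z - x⟫ +
        ∑ a, lam a * ⟪gradient (H a) x, z - x⟫ + ∑ b, mu b * ⟪gradient (C b) x, z - x⟫ := by
    simp only [inner_sub_left, sum_inner, real_inner_smul_left]
    ring
  have hHsum : ∑ a, lam a * ⟪gradient (H a) x, z - x⟫ = 0 :=
    Finset.sum_eq_zero fun a _ => by rw [hHterm a, mul_zero]
  rw [hsplit, hHsum, add_zero]
  exact add_nonneg hL (Finset.sum_nonneg fun b _ => hCterm b)

theorem stmt_3_general {N : ℕ} {n v mm : Fin (N + 1) → ℕ}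
    (f : Fin N → ((j : Fin (N + 1)) → EuclideanSpace ℝ (Fin (n j))) → ℝ)
    (h : (i : Fin (N + 1)) → Fin (v i) →
      ((j : Fin (N + 1)) → EuclideanSpace ℝ (Fin (n j))) → ℝ)
    (g : (i : Fin (N + 1)) → Fin (mm i) →
      ((j : Fin (N + 1)) → EuclideanSpace ℝ (Fin (n j))) → ℝ)
    (G : ((j : Fin (N + 1)) → EuclideanSpace ℝ (Fin (n j))) →
      EuclideanSpace ℝ (Fin (n (Fin.last N))))
    (l u : (i : Fin (N + 1)) → Fin (n i) → EReal)
    -- each h i is affine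
    (haff : ∀ i a, ∃ (φ : ((j : Fin (N + 1)) → EuclideanSpace ℝ (Fin (n j))) →ₗ[ℝ] ℝ)
      (c : ℝ), ∀ x, h i a x = φ x + c)
    -- each g i is C¹ with every component convex in xᵢ
    (hg : ∀ i b, ContDiff ℝ 1 (g i b))
    (hgconv : ∀ i b x, ConvexOn ℝ Set.univ (fun xi => g i b (Function.update x i xi)))
    -- each f i is C¹ and convex in xᵢ
    (hf : ∀ i, ContDiff ℝ 1 (f i))
    (hfconv : ∀ i x, ConvexOn ℝ Set.univ
      (fun xi => f i (Function.update x i.castSucc xi)))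
    (xs : (j : Fin (N + 1)) → EuclideanSpace ℝ (Fin (n j)))
    (lam : (i : Fin (N + 1)) → Fin (v i) → ℝ)
    (mu : (i : Fin (N + 1)) → Fin (mm i) → ℝ)
    -- box feasibility l ≤ x* ≤ u
    (hbox : ∀ i k, l i k ≤ (xs i k : EReal) ∧ (xs i k : EReal) ≤ u i k)
    -- componentwise box complementarity with the Lagrangian gradients
    (hcomp : ∀ i k,
      ((xs i k : EReal) = l i k ∧
        0 ≤ ((Fin.lastCases (motive := fun j => EuclideanSpace ℝ (Fin (n j))) (G xs)
              (fun i' => gradient (fun xi => f i' (Function.update xs i'.castSucc xi))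
                (xs i'.castSucc)) i)
            - (∑ a, lam i a • gradient (fun xi => h i a (Function.update xs i xi)) (xs i))
            - (∑ b, mu i b • gradient (fun xi => g i b (Function.update xs i xi)) (xs i))) k)
      ∨ ((Fin.lastCases (motive := fun j => EuclideanSpace ℝ (Fin (n j))) (G xs)
              (fun i' => gradient (fun xi => f i' (Function.update xs i'.castSucc xi))
                (xs i'.castSucc)) i)
            - (∑ a, lam i a • gradient (fun xi => h i a (Function.update xs i xi)) (xs i))
            - (∑ b, mu i b • gradient (fun xi => g i b (Function.update xs i xi)) (xs i))) k = 0
      ∨ ((xs i k : EReal) = u i k ∧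
        ((Fin.lastCases (motive := fun j => EuclideanSpace ℝ (Fin (n j))) (G xs)
              (fun i' => gradient (fun xi => f i' (Function.update xs i'.castSucc xi))
                (xs i'.castSucc)) i)
            - (∑ a, lam i a • gradient (fun xi => h i a (Function.update xs i xi)) (xs i))
            - (∑ b, mu i b • gradient (fun xi => g i b (Function.update xs i xi)) (xs i))) k ≤ 0))
    -- primal feasibility and complementary slackness
    (hheq : ∀ i a, h i a xs = 0)
    (hgle : ∀ i b, g i b xs ≤ 0)
    (hmu : ∀ i b, mu i b ≤ 0)
    (hslack : ∀ i b, mu i b * g i b xs = 0) :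
    -- x* solves the MOPEC
    (let K : (i : Fin (N + 1)) → Set (EuclideanSpace ℝ (Fin (n i))) := fun i =>
      {xi | (∀ k, l i k ≤ (xi k : EReal) ∧ (xi k : EReal) ≤ u i k) ∧
        (∀ a, h i a (Function.update xs i xi) = 0) ∧
        (∀ b, g i b (Function.update xs i xi) ≤ 0)};
    (∀ i : Fin N, xs i.castSucc ∈ K i.castSucc ∧
        ∀ xi ∈ K i.castSucc, f i xs ≤ f i (Function.update xs i.castSucc xi)) ∧
      (xs (Fin.last N) ∈ K (Fin.last N) ∧
        ∀ z ∈ K (Fin.last N), 0 ≤ ⟪G xs, z - xs (Fin.last N)⟫)) := by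
  intro K
  have hmem : ∀ i, xs i ∈ K i := fun i =>
    ⟨hbox i, by simpa only [Function.update_eq_self] using hheq i,
      by simpa only [Function.update_eq_self] using hgle i⟩
  have hpartial : ∀ {F : ((j : Fin (N + 1)) → EuclideanSpace ℝ (Fin (n j))) → ℝ},
      ContDiff ℝ 1 F → ∀ i, DifferentiableAt ℝ (fun z => F (Function.update xs i z)) (xs i) :=
    fun hF i => ((hF.differentiable one_ne_zero) _).comp _
      (hasFDerivAt_update xs (xs i)).differentiableAt
  have hvi : ∀ i, ∀ z ∈ K i,
      0 ≤ ⟪Fin.lastCases (motive := fun j => EuclideanSpace ℝ (Fin (n j))) (G xs)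
        (fun i' => gradient (fun xi => f i' (Function.update xs i'.castSucc xi))
          (xs i'.castSucc)) i, z - xs i⟫ := fun i z hz =>
    inner_sub_nonneg_of_lagrangian (H := fun a xi => h i a (Function.update xs i xi))
      (fun a => by obtain ⟨φ, c, hφ⟩ := haff i a; exact exists_update_eq_add_const hφ xs i)
      (fun b => hgconv i b xs) (fun b => hpartial (hg i b) i)
      (BoxComplementary.inner_sub_nonneg (hcomp i) hz.1)
      (fun a => by simpa only [Function.update_eq_self] using hheq i a) hz.2.1 hz.2.2 (hmu i)
      (fun b => by simpa only [Function.update_eq_self] using hslack i b)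
  refine ⟨fun i => ⟨hmem _, fun z hz => ?_⟩, hmem _, fun z hz => ?_⟩
  · have hgrad := hvi _ z hz
    rw [Fin.lastCases_castSucc] at hgrad
    have hconv := (hfconv i xs).inner_gradient_sub_le (hpartial (hf i) _) z
    rw [Function.update_eq_self] at hconv
    linarith
  · simpa using hvi _ z hz

/-- The 'if' direction of Proposition 3: a solution of the complementarity system
(KKT conditions of all agents collected into an MCP) solves the MOPEC, with
Kᵢ(x₋ᵢ) = {xᵢ ∈ [lᵢ, uᵢ] : hᵢ(xᵢ, x₋ᵢ) = 0, gᵢ(xᵢ, x₋ᵢ) ≤ 0}. -/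
theorem stmt_3 {N : ℕ} {n v mm : Fin (N + 1) → ℕ}
    (f : Fin N → ((j : Fin (N + 1)) → EuclideanSpace ℝ (Fin (n j))) → ℝ)
    (h : (i : Fin (N + 1)) → Fin (v i) →
      ((j : Fin (N + 1)) → EuclideanSpace ℝ (Fin (n j))) → ℝ)
    (g : (i : Fin (N + 1)) → Fin (mm i) →
      ((j : Fin (N + 1)) → EuclideanSpace ℝ (Fin (n j))) → ℝ)
    (G : ((j : Fin (N + 1)) → EuclideanSpace ℝ (Fin (n j))) →
      EuclideanSpace ℝ (Fin (n (Fin.last N))))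
    (l u : (i : Fin (N + 1)) → Fin (n i) → EReal)
    (hlu : ∀ i k, l i k ≤ u i k)
    -- each h i is affine
    (haff : ∀ i a, ∃ (φ : ((j : Fin (N + 1)) → EuclideanSpace ℝ (Fin (n j))) →ₗ[ℝ] ℝ)
      (c : ℝ), ∀ x, h i a x = φ x + c)
    -- each g i is C¹ with every component convex in xᵢ
    (hg : ∀ i b, ContDiff ℝ 1 (g i b))
    (hgconv : ∀ i b x, ConvexOn ℝ Set.univ (fun xi => g i b (Function.update x i xi)))
    -- each f i is C¹ and convex in xᵢ
    (hf : ∀ i, ContDiff ℝ 1 (f i))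
    (hfconv : ∀ i x, ConvexOn ℝ Set.univ
      (fun xi => f i (Function.update x i.castSucc xi)))
    (hG : Continuous G)
    (xs : (j : Fin (N + 1)) → EuclideanSpace ℝ (Fin (n j)))
    (lam : (i : Fin (N + 1)) → Fin (v i) → ℝ)
    (mu : (i : Fin (N + 1)) → Fin (mm i) → ℝ)
    -- box feasibility l ≤ x* ≤ u
    (hbox : ∀ i k, l i k ≤ (xs i k : EReal) ∧ (xs i k : EReal) ≤ u i k)
    -- componentwise box complementarity with the Lagrangian gradients
    (hcomp : ∀ i k,
      ((xs i k : EReal) = l i k ∧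
        0 ≤ ((Fin.lastCases (motive := fun j => EuclideanSpace ℝ (Fin (n j))) (G xs)
              (fun i' => gradient (fun xi => f i' (Function.update xs i'.castSucc xi))
                (xs i'.castSucc)) i)
            - (∑ a, lam i a • gradient (fun xi => h i a (Function.update xs i xi)) (xs i))
            - (∑ b, mu i b • gradient (fun xi => g i b (Function.update xs i xi)) (xs i))) k)
      ∨ ((Fin.lastCases (motive := fun j => EuclideanSpace ℝ (Fin (n j))) (G xs)
              (fun i' => gradient (fun xi => f i' (Function.update xs i'.castSucc xi))
                (xs i'.castSucc)) i)
            - (∑ a, lam i a • gradient (fun xi => h i a (Function.update xs i xi)) (xs i))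
            - (∑ b, mu i b • gradient (fun xi => g i b (Function.update xs i xi)) (xs i))) k = 0
      ∨ ((xs i k : EReal) = u i k ∧
        ((Fin.lastCases (motive := fun j => EuclideanSpace ℝ (Fin (n j))) (G xs)
              (fun i' => gradient (fun xi => f i' (Function.update xs i'.castSucc xi))
                (xs i'.castSucc)) i)
            - (∑ a, lam i a • gradient (fun xi => h i a (Function.update xs i xi)) (xs i))
            - (∑ b, mu i b • gradient (fun xi => g i b (Function.update xs i xi)) (xs i))) k ≤ 0))
    -- primal feasibility and complementary slackness
    (hheq : ∀ i a, h i a xs = 0)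
    (hgle : ∀ i b, g i b xs ≤ 0)
    (hmu : ∀ i b, mu i b ≤ 0)
    (hslack : ∀ i b, mu i b * g i b xs = 0) :
    -- x* solves the MOPEC
    (let K : (i : Fin (N + 1)) → Set (EuclideanSpace ℝ (Fin (n i))) := fun i =>
      {xi | (∀ k, l i k ≤ (xi k : EReal) ∧ (xi k : EReal) ≤ u i k) ∧
        (∀ a, h i a (Function.update xs i xi) = 0) ∧
        (∀ b, g i b (Function.update xs i xi) ≤ 0)};
    (∀ i : Fin N, xs i.castSucc ∈ K i.castSucc ∧
        ∀ xi ∈ K i.castSucc, f i xs ≤ f i (Function.update xs i.castSucc xi)) ∧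
      (xs (Fin.last N) ∈ K (Fin.last N) ∧
        ∀ z ∈ K (Fin.last N), 0 ≤ ⟪G xs, z - xs (Fin.last N)⟫)) :=
  stmt_3_general f h g G l u haff hg hgconv hf hfconv xs lam mu hbox hcomp hheq hgle hmu hslack
end
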